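/- arXiv:2501.07279 — 4 statements merged into one kernel-verified Lean document; each statement's English description precedes it below -/
import Mathlib

section
/- Let k ≤ n ≤ N be natural numbers, let G be a k×n matrix over F₂ = ZMod 2 of rank k, let Q be an invertible N×N matrix over F₂ (the generator matrix of a pruned polar code), let P be an N×N permutation matrix over F₂, and let S be a shortening matrix of size N×n. Then there exist an invertible k×k matrix E over F₂ and a k×N matrix M over F₂ in upper-trapezoidal (row-echelon) form such that G = E⁻¹ * M * Q * P * S; consequently the code {m * G : m ∈ F₂^k} equals {c * P * S : c ∈ C̃}, where C̃ = {m' * M * Q : m' ∈ F₂^k}. -/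
/-! Since `P * S` again has distinct standard basis vectors as columns,
`(P * S)ᵀ * (P * S) = 1`, so `A := G * (P * S)ᵀ * Q⁻¹` satisfies `A * (Q * (P * S)) = G` and
still has rank `k`. Gaussian elimination, in the form "every subspace of `F₂^N` has a basis in
row-echelon form", yields an invertible `E` with `M := E * A` upper trapezoidal, and
`G = E⁻¹ * (M * (Q * (P * S)))`. As `E⁻¹` is invertible, `m ↦ m ᵥ* E⁻¹` permutes the messages,
so both sides describe the same code. -/

open Matrix

/-- A shortening matrix: its columns are `n` distinct standard basis vectors of `F₂^N`. -/
def IsShorteningMatrix {N n : ℕ} (S : Matrix (Fin N) (Fin n) (ZMod 2)) : Prop :=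
  ∃ s : Fin n → Fin N, Function.Injective s ∧ ∀ i j, S i j = if i = s j then 1 else 0

/-- A permutation matrix. -/
def IsPermMatrix {N : ℕ} (P : Matrix (Fin N) (Fin N) (ZMod 2)) : Prop :=
  ∃ σ : Equiv.Perm (Fin N), ∀ i j, P i j = if σ i = j then 1 else 0

/-- Upper-trapezoidal (row-echelon) form. -/
def IsUpperTrapezoidal {k N : ℕ} (M : Matrix (Fin k) (Fin N) (ZMod 2)) : Prop :=
  ∃ p : Fin k → Fin N, StrictMono p ∧ (∀ i, M i (p i) = 1) ∧
    ∀ i j, j < p i → M i j = 0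

section FinConsZero

variable (K : Type*) [Field K] (N : ℕ)

def finConsZero : (Fin N → K) →ₗ[K] (Fin (N + 1) → K) :=
  (Fin.consLinearEquiv K fun _ => K).toLinearMap ∘ₗ LinearMap.inr K K _

variable {K N}

@[simp]
lemma finConsZero_apply (x : Fin N → K) : finConsZero K N x = Fin.cons 0 x := rfl

lemma finConsZero_injective : Function.Injective (finConsZero K N) := fun _ _ h => by
  simpa using h

lemma mem_range_finConsZero {v : Fin (N + 1) → K} :
    v ∈ LinearMap.range (finConsZero K N) ↔ v 0 = 0 := by
  refine ⟨?_, fun hv => ⟨Fin.tail v, ?_⟩⟩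
  · rintro ⟨x, rfl⟩
    rfl
  · rw [finConsZero_apply, ← hv, Fin.cons_self_tail]

end FinConsZero

lemma IsUpperTrapezoidal.cons_zero_col {k N : ℕ} {M : Matrix (Fin k) (Fin N) (ZMod 2)}
    (hM : IsUpperTrapezoidal M) :
    IsUpperTrapezoidal (Matrix.of fun i => (Fin.cons 0 (M i) : Fin (N + 1) → ZMod 2)) := by
  obtain ⟨p, hp, hpiv, hzero⟩ := hM
  refine ⟨Fin.succ ∘ p, Fin.strictMono_succ.comp hp, fun i => by simpa using hpiv i, ?_⟩
  intro i j hj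
  cases j using Fin.cases with
  | zero => rfl
  | succ j => exact hzero i j (Fin.succ_lt_succ_iff.mp hj)

lemma IsUpperTrapezoidal.cons_row {k N : ℕ} {M : Matrix (Fin k) (Fin (N + 1)) (ZMod 2)}
    (hM : IsUpperTrapezoidal M) (hM0 : ∀ i, M i 0 = 0) {v : Fin (N + 1) → ZMod 2}
    (hv : v 0 = 1) :
    IsUpperTrapezoidal (Fin.cons v M : Matrix (Fin (k + 1)) (Fin (N + 1)) (ZMod 2)) := by
  obtain ⟨p, hp, hpiv, hzero⟩ := hM
  have hp0 : ∀ i, 0 < p i := fun i => Fin.pos_iff_ne_zero.mpr fun h => by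
    simpa [h, hM0] using hpiv i
  refine ⟨Fin.cons 0 p, Fin.strictMono_cons.mpr ⟨hp0, hp⟩, ?_, ?_⟩
  · intro i
    cases i using Fin.cases with
    | zero => exact hv
    | succ i => exact hpiv i
  · intro i j hj
    cases i using Fin.cases with
    | zero => exact absurd hj (Fin.not_lt_zero j)
    | succ i => exact hzero i j hj

lemma Submodule.exists_isUpperTrapezoidal_basis {N : ℕ}
    (V : Submodule (ZMod 2) (Fin N → ZMod 2)) :
    ∃ (k : ℕ) (M : Matrix (Fin k) (Fin N) (ZMod 2)), IsUpperTrapezoidal M ∧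
      LinearIndependent (ZMod 2) M ∧ Submodule.span (ZMod 2) (Set.range M) = V := by
  induction N with
  | zero =>
    refine ⟨0, 0, ⟨finZeroElim, fun i => i.elim0, finZeroElim, finZeroElim⟩,
      linearIndependent_empty_type, ?_⟩
    simp [Submodule.eq_bot_of_subsingleton (p := V)]
  | succ N ih =>
    set f := finConsZero (ZMod 2) N
    obtain ⟨k, M, hM, hind, hspan⟩ := ih (V.comap f)
    set M₀ : Fin k → Fin (N + 1) → ZMod 2 := fun i => Fin.cons 0 (M i)
    have hind₀ : LinearIndependent (ZMod 2) M₀ :=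
      hind.map' f (LinearMap.ker_eq_bot.mpr finConsZero_injective)
    have hspan₀ : Submodule.span (ZMod 2) (Set.range M₀) = (V.comap f).map f := by
      rw [← hspan, ← Submodule.span_image]
      exact congrArg _ (Set.range_comp f M)
    -- Either `V` lies in `{x | x 0 = 0}`, or some `v ∈ V` with `v 0 = 1` becomes the new top row.
    by_cases hV : ∀ v ∈ V, v 0 = 0
    · refine ⟨k, M₀, hM.cons_zero_col, hind₀, ?_⟩
      rw [hspan₀, Submodule.map_comap_eq_of_le]
      exact fun v hv => mem_range_finConsZero.mpr (hV v hv)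
    push Not at hV
    obtain ⟨v, hvV, hv0⟩ := hV
    replace hv0 : v 0 = 1 := by revert hv0; generalize v 0 = a; revert a; decide
    refine ⟨k + 1, Fin.cons v M₀, hM.cons_zero_col.cons_row (fun _ => rfl) hv0, ?_, ?_⟩
    · refine linearIndependent_finCons.mpr ⟨hind₀, fun hv => ?_⟩
      rw [hspan₀, Submodule.map_comap_eq] at hv
      simpa [hv0] using mem_range_finConsZero.mp hv.1
    · rw [Fin.range_cons, Submodule.span_insert, hspan₀]
      refine le_antisymm (sup_le ((Submodule.span_singleton_le_iff_mem _ _).mpr hvV)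
        (Submodule.map_comap_le _ _)) fun w hw => ?_
      refine Submodule.mem_sup.mpr ⟨w 0 • v,
        Submodule.smul_mem _ _ (Submodule.mem_span_singleton_self v), w - w 0 • v, ?_,
        add_sub_cancel _ _⟩
      rw [Submodule.map_comap_eq]
      exact ⟨mem_range_finConsZero.mpr (by simp [hv0]), V.sub_mem hw (V.smul_mem _ hvV)⟩

lemma Matrix.exists_isUnit_isUpperTrapezoidal_mul {k N : ℕ} (A : Matrix (Fin k) (Fin N) (ZMod 2))
    (hA : A.rank = k) :
    ∃ E : Matrix (Fin k) (Fin k) (ZMod 2), IsUnit E ∧ IsUpperTrapezoidal (E * A) := by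
  obtain ⟨k', M, hM, hind, hspan⟩ :=
    (Submodule.span (ZMod 2) (Set.range A)).exists_isUpperTrapezoidal_basis
  obtain rfl : k = k' := by
    rw [← hA, A.rank_eq_finrank_span_row, Matrix.row, ← hspan, finrank_span_eq_card hind,
      Fintype.card_fin]
  have hrows : ∀ i, ∃ x, x ᵥ* A = M i := fun i => by
    obtain ⟨x, hx⟩ := (Submodule.mem_span_range_iff_exists_fun _).mp
      (hspan ▸ Submodule.subset_span ⟨i, rfl⟩ : M i ∈ Submodule.span (ZMod 2) (Set.range A))
    exact ⟨x, by rw [vecMul_eq_sum, hx]⟩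
  choose x hx using hrows
  set E : Matrix (Fin k) (Fin k) (ZMod 2) := Matrix.of x
  have hEA : E * A = M := by ext i j; exact congrFun (hx i) j
  refine ⟨E, ?_, hEA ▸ hM⟩
  rw [← vecMul_injective_iff_isUnit]
  refine Function.Injective.of_comp (f := A.vecMul) ?_
  simpa only [Function.comp_def, vecMul_vecMul, hEA] using vecMul_injective_iff.mpr hind

lemma IsShorteningMatrix.transpose_mul_self {N n : ℕ} {S : Matrix (Fin N) (Fin n) (ZMod 2)}
    (hS : IsShorteningMatrix S) : Sᵀ * S = 1 := by
  obtain ⟨s, hs, hS⟩ := hS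
  ext a b
  simp [Matrix.mul_apply, hS, Matrix.one_apply, hs.eq_iff, eq_comm]

lemma IsPermMatrix.mul_isShorteningMatrix {N n : ℕ} {P : Matrix (Fin N) (Fin N) (ZMod 2)}
    {S : Matrix (Fin N) (Fin n) (ZMod 2)} (hP : IsPermMatrix P) (hS : IsShorteningMatrix S) :
    IsShorteningMatrix (P * S) := by
  obtain ⟨σ, hσ⟩ := hP
  obtain ⟨s, hs, hS⟩ := hS
  refine ⟨σ.symm ∘ s, σ.symm.injective.comp hs, fun i j => ?_⟩
  simp [Matrix.mul_apply, hσ, hS, σ.eq_symm_apply]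

lemma Matrix.exists_eq_vecMul_mul_iff_of_isUnit {m n R : Type*} [Fintype m] [DecidableEq m]
    [CommRing R]
    {E : Matrix m m R} (hE : IsUnit E) (A : Matrix m n R) (c : n → R) :
    (∃ x, c = x ᵥ* (E * A)) ↔ ∃ x, c = x ᵥ* A := by
  refine ⟨fun ⟨x, hx⟩ => ⟨x ᵥ* E, by rw [hx, vecMul_vecMul]⟩, fun ⟨y, hy⟩ => ?_⟩
  obtain ⟨x, rfl⟩ := vecMul_surjective_iff_isUnit.mpr hE y
  exact ⟨x, by rw [hy, vecMul_vecMul]⟩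

theorem blbc_transform_shortened_general {k n N : ℕ}
    (G : Matrix (Fin k) (Fin n) (ZMod 2)) (hG : G.rank = k)
    (Q : Matrix (Fin N) (Fin N) (ZMod 2)) (hQ : IsUnit Q)
    (P : Matrix (Fin N) (Fin N) (ZMod 2)) (hP : IsPermMatrix P)
    (S : Matrix (Fin N) (Fin n) (ZMod 2)) (hS : IsShorteningMatrix S) :
    ∃ (E : Matrix (Fin k) (Fin k) (ZMod 2)) (M : Matrix (Fin k) (Fin N) (ZMod 2)),
      IsUnit E ∧ IsUpperTrapezoidal M ∧
      G = E⁻¹ * (M * (Q * (P * S))) ∧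
      {c : Fin n → ZMod 2 | ∃ m : Fin k → ZMod 2, c = m ᵥ* G} =
        {c : Fin n → ZMod 2 |
          ∃ cp ∈ {cp : Fin N → ZMod 2 | ∃ m' : Fin k → ZMod 2, cp = m' ᵥ* (M * Q)},
            c = cp ᵥ* (P * S)} := by
  have hPS : (P * S)ᵀ * (P * S) = 1 := (hP.mul_isShorteningMatrix hS).transpose_mul_self
  set A := G * (P * S)ᵀ * Q⁻¹
  have hA : A * (Q * (P * S)) = G := by
    rw [Matrix.mul_assoc,
      nonsing_inv_mul_cancel_left Q (P * S) ((isUnit_iff_isUnit_det Q).mp hQ),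
      Matrix.mul_assoc, hPS, Matrix.mul_one]
  have hrank : A.rank = k := le_antisymm
    ((rank_mul_le_left _ _).trans ((rank_mul_le_left _ _).trans hG.le))
    (by simpa [hA, hG] using rank_mul_le_left A (Q * (P * S)))
  obtain ⟨E, hE, hEA⟩ := A.exists_isUnit_isUpperTrapezoidal_mul hrank
  have hG' : G = E⁻¹ * (E * A * (Q * (P * S))) := by
    rw [Matrix.mul_assoc, hA, nonsing_inv_mul_cancel_left E _ ((isUnit_iff_isUnit_det E).mp hE)]
  refine ⟨E, E * A, hE, hEA, hG', ?_⟩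
  ext c
  rw [Set.mem_ofPred_eq, hG', exists_eq_vecMul_mul_iff_of_isUnit (isUnit_nonsing_inv_iff.mpr hE)]
  simp [Matrix.mul_assoc]

/-- Any `(n,k)`-binary linear block code can be transformed into a shortened, permuted
version of a pruned polar code with dynamic frozen bits. -/
theorem blbc_transform_shortened {k n N : ℕ} (hkn : k ≤ n) (hnN : n ≤ N)
    (G : Matrix (Fin k) (Fin n) (ZMod 2)) (hG : G.rank = k)
    (Q : Matrix (Fin N) (Fin N) (ZMod 2)) (hQ : IsUnit Q)
    (P : Matrix (Fin N) (Fin N) (ZMod 2)) (hP : IsPermMatrix P)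
    (S : Matrix (Fin N) (Fin n) (ZMod 2)) (hS : IsShorteningMatrix S) :
    ∃ (E : Matrix (Fin k) (Fin k) (ZMod 2)) (M : Matrix (Fin k) (Fin N) (ZMod 2)),
      IsUnit E ∧ IsUpperTrapezoidal M ∧
      G = E⁻¹ * (M * (Q * (P * S))) ∧
      {c : Fin n → ZMod 2 | ∃ m : Fin k → ZMod 2, c = m ᵥ* G} =
        {c : Fin n → ZMod 2 |
          ∃ cp ∈ {cp : Fin N → ZMod 2 | ∃ m' : Fin k → ZMod 2, cp = m' ᵥ* (M * Q)},
            c = cp ᵥ* (P * S)} :=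
  blbc_transform_shortened_general G hG Q hQ P hP S hS
end

section
/- Let k ≤ n ≤ N be natural numbers, let G be a k×n matrix over F₂ = ZMod 2 of rank k, let Q be an invertible N×N matrix over F₂, let P be an N×N permutation matrix over F₂, let S be a shortening matrix of size N×n, let E be an invertible k×k matrix over F₂, and let M be a k×N matrix over F₂ such that G = E⁻¹ * M * Q * P * S. Then the map c ↦ c * P * S is a bijection from the code C̃ = {m' * M * Q : m' ∈ F₂^k} onto the code C = {m * G : m ∈ F₂^k}; in particular the one-to-one correspondence between codewords is c = c_p * P * S. -/
open Matrix

/-! Since `M Q (P S) = E G`, the codeword `x M Q` is sent to `(x E) G`: invertibility of `E`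
makes this hit every codeword of `G`, and full row rank of `G` makes it injective. -/

namespace Matrix

theorem vecMul_injective_of_rank_eq_card {K m n : Type*} [Field K] [Fintype m] [Fintype n]
    {G : Matrix m n K} (hG : G.rank = Fintype.card m) : Function.Injective G.vecMul := by
  rw [vecMul_injective_iff, linearIndependent_iff_card_eq_finrank_span, Set.finrank,
    ← rank_eq_finrank_span_row, hG]

variable {R k m n : Type*} [CommRing R] [Fintype k] [DecidableEq k] [Fintype m]

theorem range_vecMul_isUnit_mul {E : Matrix k k R} (hE : IsUnit E) (G : Matrix k n R) :
    Set.range (E * G).vecMul = Set.range G.vecMul := by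
  have hcomp : (E * G).vecMul = G.vecMul ∘ E.vecMul := funext fun x => (vecMul_vecMul x E G).symm
  rw [hcomp, Set.range_comp, (vecMul_surjective_iff_isUnit.2 hE).range_eq, Set.image_univ]

theorem bijOn_vecMul_range_of_mul_eq_isUnit_mul {A : Matrix k m R} {T : Matrix m n R}
    {E : Matrix k k R} {G : Matrix k n R} (hE : IsUnit E) (hG : Function.Injective G.vecMul)
    (hAT : A * T = E * G) :
    Set.BijOn T.vecMul (Set.range A.vecMul) (Set.range G.vecMul) := by
  have hvecMul : ∀ x, (x ᵥ* A) ᵥ* T = (x ᵥ* E) ᵥ* G := fun x => by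
    rw [vecMul_vecMul, hAT, vecMul_vecMul]
  have himage : T.vecMul '' Set.range A.vecMul = Set.range G.vecMul := by
    rw [← Set.range_comp, ← range_vecMul_isUnit_mul hE, ← hAT]
    exact congrArg Set.range (funext fun x => vecMul_vecMul x A T)
  refine himage ▸ Set.InjOn.bijOn_image ?_
  rintro _ ⟨x, rfl⟩ _ ⟨y, rfl⟩ hxy
  have hxy' : x ᵥ* E ᵥ* G = y ᵥ* E ᵥ* G := by simpa only [hvecMul] using hxy
  rw [vecMul_injective_of_isUnit hE (hG hxy')]

end Matrix

theorem blbc_transform_bijective_general {k n N : ℕ}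
    (G : Matrix (Fin k) (Fin n) (ZMod 2)) (hG : G.rank = k)
    (Q : Matrix (Fin N) (Fin N) (ZMod 2))
    (P : Matrix (Fin N) (Fin N) (ZMod 2))
    (S : Matrix (Fin N) (Fin n) (ZMod 2))
    (E : Matrix (Fin k) (Fin k) (ZMod 2)) (hE : IsUnit E)
    (M : Matrix (Fin k) (Fin N) (ZMod 2))
    (hGdef : G = E⁻¹ * (M * (Q * (P * S)))) :
    Set.BijOn (fun c : Fin N → ZMod 2 => c ᵥ* (P * S))
      {cp : Fin N → ZMod 2 | ∃ m' : Fin k → ZMod 2, cp = m' ᵥ* (M * Q)}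
      {c : Fin n → ZMod 2 | ∃ m : Fin k → ZMod 2, c = m ᵥ* G} := by
  have hrange : ∀ {r c : ℕ} (A : Matrix (Fin r) (Fin c) (ZMod 2)),
      {v | ∃ x, v = x ᵥ* A} = Set.range A.vecMul := fun A => by
    ext v; exact exists_congr fun x => eq_comm
  have hG' : Function.Injective G.vecMul :=
    vecMul_injective_of_rank_eq_card (hG.trans (Fintype.card_fin k).symm)
  have hMQPS : M * Q * (P * S) = E * G := by
    rw [hGdef, ← Matrix.mul_assoc E, mul_nonsing_inv E ((isUnit_iff_isUnit_det E).1 hE),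
      Matrix.one_mul, Matrix.mul_assoc]
  rw [hrange, hrange]
  exact bijOn_vecMul_range_of_mul_eq_isUnit_mul hE hG' hMQPS

/-- The map `c ↦ c * P * S` is a one-to-one correspondence between the codewords of the
transformed polar-like code `C̃ = {m' * M * Q}` and the codewords of the original
binary linear block code `C = {m * G}`. -/
theorem blbc_transform_bijective {k n N : ℕ} (hkn : k ≤ n) (hnN : n ≤ N)
    (G : Matrix (Fin k) (Fin n) (ZMod 2)) (hG : G.rank = k)
    (Q : Matrix (Fin N) (Fin N) (ZMod 2)) (hQ : IsUnit Q)
    (P : Matrix (Fin N) (Fin N) (ZMod 2)) (hP : IsPermMatrix P)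
    (S : Matrix (Fin N) (Fin n) (ZMod 2)) (hS : IsShorteningMatrix S)
    (E : Matrix (Fin k) (Fin k) (ZMod 2)) (hE : IsUnit E)
    (M : Matrix (Fin k) (Fin N) (ZMod 2))
    (hGdef : G = E⁻¹ * (M * (Q * (P * S)))) :
    Set.BijOn (fun c : Fin N → ZMod 2 => c ᵥ* (P * S))
      {cp : Fin N → ZMod 2 | ∃ m' : Fin k → ZMod 2, cp = m' ᵥ* (M * Q)}
      {c : Fin n → ZMod 2 | ∃ m : Fin k → ZMod 2, c = m ᵥ* G} :=
  blbc_transform_bijective_general G hG Q P S E hE M hGdef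
end

section
/- Fix m ≥ 0 and identify indices of 2^m × 2^m matrices over F₂ = ZMod 2 with functions Fin m → Fin 2. Let A be any 2×2 matrix over F₂, let A^{⊗m} be the matrix with entries (A^{⊗m}) u v = ∏_i A (u i) (v i), and let B be the bit-reversal permutation matrix, B u v = if u = v ∘ rev then 1 else 0, where rev : Fin m → Fin m is the order-reversing bijection i ↦ m − 1 − i. Then B commutes with A^{⊗m}: B * A^{⊗m} = A^{⊗m} * B. Consequently, for Arıkan's kernel F₂ₖ = ![![1, 0], ![1, 1]], the polar transform G_N = B * F₂ₖ^{⊗m} satisfies G_N * G_N = I, so G_N is invertible. -/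
open Matrix

/-- Arıkan's 2×2 polarization kernel over `F₂`. -/
def arikanKernel : Matrix (Fin 2) (Fin 2) (ZMod 2) := !![1, 0; 1, 1]

/-- The `m`-fold Kronecker power of a 2×2 matrix, with indices of the
`2^m × 2^m` matrix identified with functions `Fin m → Fin 2`. -/
def kronPow (A : Matrix (Fin 2) (Fin 2) (ZMod 2)) (m : ℕ) :
    Matrix (Fin m → Fin 2) (Fin m → Fin 2) (ZMod 2) :=
  fun u v => ∏ i, A (u i) (v i)

/-- The bit-reversal permutation matrix, where `Fin.rev : Fin m → Fin m` is
the order-reversing bijection `i ↦ m - 1 - i`. -/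
def bitRev (m : ℕ) : Matrix (Fin m → Fin 2) (Fin m → Fin 2) (ZMod 2) :=
  fun u v => if u = v ∘ Fin.rev then 1 else 0

/-!
Bit reversal is the permutation matrix of `u ↦ u ∘ Fin.rev`, which merely permutes the tensor
factors; a Kronecker power of a single matrix is invariant under any permutation of its factors,
so the two commute. Hence `(B F^{⊗m})² = B² (F²)^{⊗m}` by the mixed-product rule, and both
`B² = 1` and `F² = 1` over `F₂`.
-/

theorem Fin.comp_rev_involutive {α : Type*} (m : ℕ) :
    Function.Involutive fun u : Fin m → α => u ∘ Fin.rev :=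
  fun u => funext fun i => congrArg u (Fin.rev_rev i)

def revCoords (α : Type*) (m : ℕ) : Equiv.Perm (Fin m → α) :=
  (Fin.comp_rev_involutive m).toPerm _

@[simp]
theorem revCoords_apply {α : Type*} {m : ℕ} (u : Fin m → α) : revCoords α m u = u ∘ Fin.rev :=
  rfl

theorem revCoords_mul_self (α : Type*) (m : ℕ) : revCoords α m * revCoords α m = 1 :=
  Equiv.ext (Fin.comp_rev_involutive m)

theorem bitRev_eq_permMatrix (m : ℕ) : bitRev m = (revCoords (Fin 2) m).permMatrix (ZMod 2) := by
  ext u v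
  simp [bitRev, (Fin.comp_rev_involutive m).eq_iff]

theorem bitRev_mul_self (m : ℕ) : bitRev m * bitRev m = 1 := by
  rw [bitRev_eq_permMatrix, ← permMatrix_mul, revCoords_mul_self, permMatrix_one]

theorem kronPow_apply_comp_perm (A : Matrix (Fin 2) (Fin 2) (ZMod 2)) {m : ℕ}
    (τ : Equiv.Perm (Fin m)) (u v : Fin m → Fin 2) :
    kronPow A m (u ∘ τ) (v ∘ τ) = kronPow A m u v :=
  Equiv.prod_comp τ fun i => A (u i) (v i)

theorem kronPow_apply_comp_rev (A : Matrix (Fin 2) (Fin 2) (ZMod 2)) {m : ℕ}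
    (u v : Fin m → Fin 2) : kronPow A m (u ∘ Fin.rev) v = kronPow A m u (v ∘ Fin.rev) :=
  (kronPow_apply_comp_perm A Fin.revPerm (u ∘ Fin.rev) v).symm.trans
    (congrArg (kronPow A m · (v ∘ Fin.rev)) (Fin.comp_rev_involutive m u))

theorem commute_bitRev_kronPow (A : Matrix (Fin 2) (Fin 2) (ZMod 2)) (m : ℕ) :
    Commute (bitRev m) (kronPow A m) := by
  rw [Commute, SemiconjBy, bitRev_eq_permMatrix, PEquiv.toMatrix_toPEquiv_mul,
    PEquiv.mul_toMatrix_toPEquiv]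
  ext u v
  exact kronPow_apply_comp_rev A u v

theorem kronPow_mul (A A' : Matrix (Fin 2) (Fin 2) (ZMod 2)) (m : ℕ) :
    kronPow A m * kronPow A' m = kronPow (A * A') m := by
  ext u v
  simp only [kronPow, mul_apply, Fintype.prod_sum, Finset.prod_mul_distrib]

theorem kronPow_one (m : ℕ) : kronPow 1 m = 1 := by
  ext u v
  simp [kronPow, one_apply, Fintype.prod_boole, funext_iff]

theorem arikanKernel_mul_self : arikanKernel * arikanKernel = 1 := by
  decide

/-- The bit-reversal permutation commutes with every `m`-fold Kronecker power of a
2×2 matrix; consequently the polar transform `G_N = B_N * F₂^{⊗m}` squares to the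
identity, hence is invertible. -/
theorem bitRev_comm_kronPow_and_polar_involutive (m : ℕ) :
    (∀ A : Matrix (Fin 2) (Fin 2) (ZMod 2),
      bitRev m * kronPow A m = kronPow A m * bitRev m) ∧
    (bitRev m * kronPow arikanKernel m) * (bitRev m * kronPow arikanKernel m) = 1 := by
  refine ⟨fun A => (commute_bitRev_kronPow A m).eq, ?_⟩
  rw [(commute_bitRev_kronPow arikanKernel m).symm.mul_mul_mul_comm, bitRev_mul_self,
    kronPow_mul, arikanKernel_mul_self, kronPow_one, one_mul]
end

section
/- Let Y be a finite type and let W : Fin 2 → Y → ℝ be a binary-input channel kernel with all values nonnegative. Define the plus-channel W⁺ : Fin 2 → (Y × Y × Fin 2) → ℝ by W⁺ u₂ (y₁, y₂, u₁) = (1/2) · W (u₁ + u₂) y₁ · W u₂ y₂ (addition of inputs in Fin 2 = ZMod 2). Then the Bhattacharyya parameter satisfies Z(W⁺) = Z(W)², where Z(W) = Σ_{y ∈ Y} √(W 0 y · W 1 y) and Z(W⁺) = Σ_{(y₁,y₂,u₁)} √(W⁺ 0 (y₁,y₂,u₁) · W⁺ 1 (y₁,y₂,u₁)). -/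
/-- The Bhattacharyya parameter of a binary-input channel kernel on a finite
output alphabet. -/
noncomputable def bhattacharyya {Y : Type*} [Fintype Y] (W : Fin 2 → Y → ℝ) : ℝ :=
  ∑ y : Y, Real.sqrt (W 0 y * W 1 y)

/-- Arıkan's plus-channel `W⁺ = W ⊛ W`, with output alphabet `Y × Y × Fin 2` and
`W⁺ u₂ (y₁, y₂, u₁) = (1/2) ⬝ W (u₁ + u₂) y₁ ⬝ W u₂ y₂` (input addition mod 2). -/
noncomputable def plusChannel {Y : Type*} (W : Fin 2 → Y → ℝ) : Fin 2 → Y × Y × Fin 2 → ℝ :=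
  fun u₂ p => (1 / 2) * W (p.2.2 + u₂) p.1 * W u₂ p.2.1

/-! Over `Fin 2`, `u ↦ u + 1` swaps the two inputs, so whatever `u₁` is, the first
factors of `W⁺ 0` and `W⁺ 1` are `W 0 y₁` and `W 1 y₁` in some order; hence
`√(W⁺ 0 · W⁺ 1) (y₁, y₂, u₁) = ½ √(W 0 y₁ · W 1 y₁) √(W 0 y₂ · W 1 y₂)`,
and summing over the two values of `u₁` cancels the `½`. -/

theorem Fin.mul_apply_add_one {M : Type*} [CommMonoid M] (f : Fin 2 → M) (u : Fin 2) :
    f u * f (u + 1) = f 0 * f 1 := by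
  fin_cases u
  · rfl
  · exact mul_comm _ _

theorem plusChannel_zero_mul_plusChannel_one {Y : Type*} (W : Fin 2 → Y → ℝ) (y₁ y₂ : Y)
    (u₁ : Fin 2) :
    plusChannel W 0 (y₁, y₂, u₁) * plusChannel W 1 (y₁, y₂, u₁)
      = (1 / 2) ^ 2 * ((W 0 y₁ * W 1 y₁) * (W 0 y₂ * W 1 y₂)) := by
  have h := Fin.mul_apply_add_one (fun u => W u y₁) u₁
  simp only [plusChannel, add_zero] at h ⊢
  linear_combination (1 / 2) ^ 2 * (W 0 y₂ * W 1 y₂) * h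

theorem sqrt_plusChannel_zero_mul_plusChannel_one {Y : Type*} (W : Fin 2 → Y → ℝ)
    (hW : ∀ u y, 0 ≤ W u y) (y₁ y₂ : Y) (u₁ : Fin 2) :
    Real.sqrt (plusChannel W 0 (y₁, y₂, u₁) * plusChannel W 1 (y₁, y₂, u₁))
      = 1 / 2 * (Real.sqrt (W 0 y₁ * W 1 y₁) * Real.sqrt (W 0 y₂ * W 1 y₂)) := by
  rw [plusChannel_zero_mul_plusChannel_one, Real.sqrt_mul (by positivity),
    Real.sqrt_sq (by norm_num), Real.sqrt_mul (mul_nonneg (hW 0 y₁) (hW 1 y₁))]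

/-- `Z(W⁺) = Z(W)²`. -/
theorem bhattacharyya_plusChannel {Y : Type*} [Fintype Y] (W : Fin 2 → Y → ℝ)
    (hW : ∀ u y, 0 ≤ W u y) :
    bhattacharyya (plusChannel W) = (bhattacharyya W) ^ 2 := by
  set s : Y → ℝ := fun y => Real.sqrt (W 0 y * W 1 y)
  calc bhattacharyya (plusChannel W)
      = ∑ y₁ : Y, ∑ y₂ : Y, ∑ _u₁ : Fin 2, 1 / 2 * (s y₁ * s y₂) := by
        simp only [bhattacharyya, Fintype.sum_prod_type,
          sqrt_plusChannel_zero_mul_plusChannel_one W hW, s]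
    _ = (∑ y : Y, s y) ^ 2 := by
        simp only [Fin.sum_univ_two, sq, Finset.sum_mul_sum]
        exact Finset.sum_congr rfl fun _ _ => Finset.sum_congr rfl fun _ _ => by ring
end
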